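/- Let x₀ ∈ ℂ, let L = {x₀ + t·i : t ∈ [0,1]}, let L° = {x₀ + t·i : 0 < t < 1}, and let g : ℂ̂ → ℂ̂ be a continuous surjection of the extended plane such that g⁻¹({x₀}) = L and g⁻¹({x}) is a singleton for every x ≠ x₀. Let X ⊆ ℂ̂ be a locally connected continuum with x₀ ∈ X such that the closure of g⁻¹(X) \ L meets L exactly in the two points x₀ and x₀ + i. Then g⁻¹(X) \ L° is either a locally connected continuum or the union of two disjoint locally connected continua; that is, it has at most two connected components and each component is a locally connected continuum. -/

import Mathlib

/-!
Write `L = g⁻¹(x₀)` and `Z = closure (g⁻¹(X) \ L)`. The hypothesis on the closure says that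
`g⁻¹(X) \ L° = Z` and `Z ∩ L = {x₀, x₀ + i}`.

As a closed map with connected fibres, `g` pulls closed connected subsets of `X` back to connected
sets. Boundary bumping: if `W` is connected, `S ⊆ W` is compact and `W \ S ⊆ L`, then every
component of `S` meets `L`. Taking `W = g⁻¹(X)` and `S = Z`, every component of `Z` contains
`x₀` or `x₀ + i`.

For local connectedness of `Z` at `z`, separate `z` from the other points of `Z ∩ L` and take a
small closed connected neighbourhood `K` of `g z` in `X`. Boundary bumping for `W = g⁻¹(K)` and
`S = W ∩ Z` shows that the component of `z` in `S` contains every point of `S` near `z`.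
Components of the locally connected compact set `Z` are open in it, hence locally connected.
-/

open Set Topology OnePoint

noncomputable section

/-- The set of connected components of a subset `S`. -/
def comps {α : Type*} [TopologicalSpace α] (S : Set α) : Set (Set α) :=
  {C | ∃ z ∈ S, C = connectedComponentIn S z}

/-- The closed vertical segment `L` from `x₀` to `x₀ + i`, inside the extended
plane. -/
def seg (x₀ : ℂ) : Set (OnePoint ℂ) :=
  (fun t : ℝ => ((x₀ + t * Complex.I : ℂ) : OnePoint ℂ)) '' Icc (0 : ℝ) 1

/-- The open vertical segment `L°` from `x₀` to `x₀ + i`, inside the extended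
plane. -/
def segO (x₀ : ℂ) : Set (OnePoint ℂ) :=
  (fun t : ℝ => ((x₀ + t * Complex.I : ℂ) : OnePoint ℂ)) '' Ioo (0 : ℝ) 1

open Filter

section

variable {α β : Type*} [TopologicalSpace α] [TopologicalSpace β]

theorem diff_eq_closure_diff {Y L L' : Set α} (hY : IsClosed Y) (hL' : L' ⊆ L)
    (h : closure (Y \ L) ∩ L = L \ L') : Y \ L' = closure (Y \ L) := by
  ext w
  constructor
  · rintro ⟨hwY, hwL'⟩
    by_cases hwL : w ∈ L
    · exact (h.symm ▸ ⟨hwL, hwL'⟩ : w ∈ closure (Y \ L) ∩ L).1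
    · exact subset_closure ⟨hwY, hwL⟩
  · intro hw
    exact ⟨closure_minimal sdiff_subset hY hw,
      fun hwL' => (h ▸ ⟨hw, hL' hwL'⟩ : w ∈ L \ L').2 hwL'⟩

theorem locallyConnectedSpace_subtype_iff {s : Set α} :
    LocallyConnectedSpace s ↔
      ∀ x ∈ s, ∀ U ∈ 𝓝 x, ∃ V ∈ 𝓝[s] x, V ⊆ s ∩ U ∧ IsPreconnected V := by
  rw [locallyConnectedSpace_iff_connected_subsets]
  constructor
  · intro h x hx U hU
    obtain ⟨V, hV, hVc, hVU⟩ := h ⟨x, hx⟩ (Subtype.val ⁻¹' U)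
      (preimage_coe_mem_nhds_subtype.2 (mem_nhdsWithin_of_mem_nhds hU))
    refine ⟨Subtype.val '' V, mem_nhds_subtype_iff_nhdsWithin.1 hV, ?_,
      IsInducing.subtypeVal.isPreconnected_image.2 hVc⟩
    rintro _ ⟨y, hy, rfl⟩
    exact ⟨y.2, hVU hy⟩
  · rintro h ⟨x, hx⟩ U hU
    obtain ⟨u, hu, hus⟩ := mem_nhdsWithin_iff_exists_mem_nhds_inter.1
      (mem_nhds_subtype_iff_nhdsWithin.1 hU)
    obtain ⟨V, hV, hVsu, hVc⟩ := h x hx u hu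
    refine ⟨Subtype.val ⁻¹' V, preimage_coe_mem_nhds_subtype.2 hV, ?_, fun y hy => ?_⟩
    · rwa [← IsInducing.subtypeVal.isPreconnected_image, Subtype.image_preimage_coe,
        inter_eq_right.2 (hVsu.trans inter_subset_left)]
    · obtain ⟨y', hy'U, hy'⟩ := hus ⟨(hVsu hy).2, y.2⟩
      rwa [← Subtype.ext hy']

theorem locallyConnectedSpace_connectedComponentIn {s : Set α} [LocallyConnectedSpace s]
    {x : α} (hx : x ∈ s) : LocallyConnectedSpace (connectedComponentIn s x) := by
  have hsub := connectedComponentIn_subset s x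
  refine IsOpenEmbedding.locallyConnectedSpace (f := inclusion hsub) ⟨.inclusion hsub, ?_⟩
  rw [range_inclusion, connectedComponentIn_eq_image hx]
  change IsOpen (Subtype.val ⁻¹' (Subtype.val '' _))
  rw [Subtype.val_injective.preimage_image]
  exact isOpen_connectedComponent

theorem IsClosed.connectedComponentIn {F : Set α} (hF : IsClosed F) (x : α) :
    IsClosed (connectedComponentIn F x) := by
  by_cases hx : x ∈ F
  · rw [connectedComponentIn_eq_image hx]
    exact hF.isClosedEmbedding_subtypeVal.isClosedMap _ isClosed_connectedComponent
  · rw [connectedComponentIn_eq_empty hx]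
    exact isClosed_empty

theorem isCompact_isConnected_locallyConnectedSpace_of_mem_comps [CompactSpace α] {F : Set α}
    (hF : IsClosed F) [LocallyConnectedSpace F] {C : Set α} (hC : C ∈ comps F) :
    IsCompact C ∧ IsConnected C ∧ LocallyConnectedSpace C := by
  obtain ⟨z, hz, rfl⟩ := hC
  exact ⟨(hF.connectedComponentIn z).isCompact, isConnected_connectedComponentIn_iff.2 hz,
    locallyConnectedSpace_connectedComponentIn hz⟩

theorem exists_isClosed_isConnected_mem_nhdsWithin_subset [RegularSpace β] {X : Set β}
    (hX : IsClosed X) [LocallyConnectedSpace X] {y : β} (hy : y ∈ X) {U : Set β}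
    (hU : U ∈ 𝓝 y) : ∃ K ∈ 𝓝[X] y, K ⊆ X ∩ U ∧ IsClosed K ∧ IsConnected K := by
  obtain ⟨U', hU', hU'c, hU'U⟩ := exists_mem_nhds_isClosed_subset hU
  obtain ⟨V, hV, hVXU, hVc⟩ := locallyConnectedSpace_subtype_iff.1 ‹_› y hy U' hU'
  refine ⟨closure V, mem_of_superset hV subset_closure, subset_inter ?_ ?_, isClosed_closure,
    ⟨⟨y, subset_closure (mem_of_mem_nhdsWithin hy hV)⟩, hVc.closure⟩⟩
  · exact closure_minimal (hVXU.trans inter_subset_left) hX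
  · exact (closure_minimal (hVXU.trans inter_subset_right) hU'c).trans hU'U

theorem exists_isClopen_mem_subset_of_connectedComponent_subset [CompactSpace α] [T2Space α]
    {x : α} {U : Set α} (hU : IsOpen U) (h : connectedComponent x ⊆ U) :
    ∃ V, IsClopen V ∧ x ∈ V ∧ V ⊆ U := by
  rw [connectedComponent_eq_iInter_isClopen] at h
  obtain ⟨F, hF⟩ := hU.isClosed_compl.isCompact.elim_finite_subfamily_closed
    (fun s : {s : Set α // IsClopen s ∧ x ∈ s} => s.1) (fun s => s.2.1.isClosed)
    (by rw [inter_comm]; exact sdiff_eq_empty.2 h)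
  refine ⟨⋂ s ∈ F, s.1, isClopen_biInter_finset fun s _ => s.2.1,
    mem_iInter₂.2 fun s _ => s.2.2, fun y hy => by_contra fun hyU => ?_⟩
  exact (hF ▸ ⟨hyU, hy⟩ : y ∈ (∅ : Set α))

theorem connectedComponentIn_inter_nonempty_of_diff_subset [T2Space α] {W S L : Set α}
    (hW : IsPreconnected W) (hS : IsCompact S) (hSW : S ⊆ W) (hL : IsClosed L)
    (hWS : W \ S ⊆ L) (hWL : (W ∩ L).Nonempty) {z : α} (hz : z ∈ S) :
    (connectedComponentIn S z ∩ L).Nonempty := by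
  by_contra hC
  have := isCompact_iff_compactSpace.1 hS
  obtain ⟨V, hV, hzV, hVL⟩ := exists_isClopen_mem_subset_of_connectedComponent_subset
    (hL.isOpen_compl.preimage continuous_subtype_val) fun y hy hyL =>
      hC ⟨y, by rw [connectedComponentIn_eq_image hz]; exact mem_image_of_mem _ hy, hyL⟩
  obtain ⟨O, hO, rfl⟩ := isOpen_induced_iff.1 hV.isOpen
  have hSO : IsClosed (S ∩ O) := by
    rw [← Subtype.image_preimage_coe]
    exact (hV.isClosed.isCompact.image continuous_subtype_val).isClosed
  have hSOL : S ∩ O ⊆ Lᶜ := fun y hy => hVL (show (⟨y, hy.1⟩ : S) ∈ Subtype.val ⁻¹' O from hy.2)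
  -- `S ∩ O` is closed, and open in `W` because `W ∩ (O ∩ Lᶜ) = S ∩ O`.
  have hcover : W ⊆ (O ∩ Lᶜ) ∪ (S ∩ O)ᶜ := fun w _ => by
    by_cases hw : w ∈ S ∩ O
    · exact Or.inl ⟨hw.2, hSOL hw⟩
    · exact Or.inr hw
  obtain ⟨w, hwW, ⟨hwO, hwL⟩, hwSO⟩ := hW _ _ (hO.inter hL.isOpen_compl) hSO.isOpen_compl hcover
    ⟨z, hSW hz, hzV, hVL hzV⟩ (hWL.imp fun l hl => ⟨hl.1, fun hlSO => hSOL hlSO hl.2⟩)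
  exact hwSO ⟨by_contra fun hwS => hwL (hWS ⟨hwW, hwS⟩), hwO⟩

theorem inter_subset_connectedComponentIn_of_separated {S U₁ U₂ L : Set α} {z : α}
    (hU₁ : IsOpen U₁) (hU₂ : IsOpen U₂) (hdisj : Disjoint U₁ U₂) (hS : S ⊆ U₁ ∪ U₂)
    (hSL : S ∩ L ∩ U₁ ⊆ {z}) (hmeet : ∀ y ∈ S, (connectedComponentIn S y ∩ L).Nonempty) :
    S ∩ U₁ ⊆ connectedComponentIn S z := by
  rintro y ⟨hyS, hyU₁⟩
  have hCU₁ : connectedComponentIn S y ⊆ U₁ :=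
    isPreconnected_connectedComponentIn.subset_left_of_subset_union hU₁ hU₂ hdisj
      ((connectedComponentIn_subset S y).trans hS) ⟨y, mem_connectedComponentIn hyS, hyU₁⟩
  obtain ⟨l, hlC, hlL⟩ := hmeet y hyS
  obtain rfl : l = z := hSL ⟨⟨connectedComponentIn_subset S y hlC, hlL⟩, hCU₁ hlC⟩
  rw [← connectedComponentIn_eq hlC]
  exact mem_connectedComponentIn hyS

theorem Continuous.isConnected_preimage_of_fibers [CompactSpace α] [T2Space β] {g : α → β}
    (hg : Continuous g) (hfib : ∀ y, IsConnected (g ⁻¹' {y})) {K : Set β} (hK : IsClosed K)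
    (hKc : IsConnected K) : IsConnected (g ⁻¹' K) :=
  (hg.isClosedMap.isQuotientMap hg fun y => (hfib y).nonempty).isCoinducing
    |>.isConnected_preimage_of_isClosed hfib hK hKc

theorem exists_mem_nhdsWithin_preimage_inter_subset [CompactSpace α] [T2Space β] [RegularSpace β]
    {g : α → β} (hg : Continuous g) {X : Set β} (hX : IsClosed X) [LocallyConnectedSpace X]
    {Z U : Set α} (hZ : IsClosed Z) (hU : IsOpen U) {y : β} (hy : y ∈ X) (hyU : Z ∩ g ⁻¹' {y} ⊆ U) :
    ∃ K ∈ 𝓝[X] y, K ⊆ X ∧ IsClosed K ∧ IsConnected K ∧ g ⁻¹' K ∩ Z ⊆ U := by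
  have hy' : y ∉ g '' (Z \ U) := by
    rintro ⟨w, ⟨hwZ, hwU⟩, hw⟩
    exact hwU (hyU ⟨hwZ, hw⟩)
  obtain ⟨K, hK, hKXU, hKc, hKconn⟩ := exists_isClosed_isConnected_mem_nhdsWithin_subset hX hy
    ((hg.isClosedMap _ (hZ.sdiff hU)).isOpen_compl.mem_nhds hy')
  exact ⟨K, hK, hKXU.trans inter_subset_left, hKc, hKconn,
    fun w hw => by_contra fun hwU => (hKXU hw.1).2 ⟨w, ⟨hw.2, hwU⟩, rfl⟩⟩

end

section Collapse

variable {α β : Type*} [TopologicalSpace α] [CompactSpace α] [T2Space α] [TopologicalSpace β]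
  [T2Space β] {g : α → β} {X : Set β} {x₀ : β}

theorem connectedComponentIn_preimage_inter_closure_inter_fiber_nonempty (hg : Continuous g)
    (hfib : ∀ y, IsConnected (g ⁻¹' {y})) {K : Set β} (hK : IsClosed K) (hKc : IsConnected K)
    (hKX : K ⊆ X) (hx₀K : x₀ ∈ K) {z : α} (hz : z ∈ g ⁻¹' K ∩ closure (g ⁻¹' (X \ {x₀}))) :
    (connectedComponentIn (g ⁻¹' K ∩ closure (g ⁻¹' (X \ {x₀}))) z ∩ g ⁻¹' {x₀}).Nonempty := by
  obtain ⟨l, hl⟩ := (hfib x₀).nonempty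
  refine connectedComponentIn_inter_nonempty_of_diff_subset
    (hg.isConnected_preimage_of_fibers hfib hK hKc).isPreconnected
    ((hK.preimage hg).inter isClosed_closure).isCompact inter_subset_left
    (isClosed_singleton.preimage hg) (fun w hw => ?_) ⟨l, ?_, hl⟩ hz
  · exact by_contra fun hwx₀ => hw.2 ⟨hw.1, subset_closure ⟨hKX hw.1, hwx₀⟩⟩
  · rwa [mem_preimage, mem_singleton_iff.1 hl]

theorem comps_closure_preimage_diff_subset (hg : Continuous g)
    (hfib : ∀ y, IsConnected (g ⁻¹' {y})) (hX : IsClosed X) (hXc : IsConnected X) (hx₀ : x₀ ∈ X)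
    {a b : α} (hab : closure (g ⁻¹' (X \ {x₀})) ∩ g ⁻¹' {x₀} = {a, b}) :
    comps (closure (g ⁻¹' (X \ {x₀}))) ⊆
      {connectedComponentIn (closure (g ⁻¹' (X \ {x₀}))) a,
        connectedComponentIn (closure (g ⁻¹' (X \ {x₀}))) b} := by
  rintro _ ⟨z, hz, rfl⟩
  have hZX : closure (g ⁻¹' (X \ {x₀})) ⊆ g ⁻¹' X :=
    closure_minimal (preimage_mono sdiff_subset) (hX.preimage hg)
  obtain ⟨l, hlC, hlL⟩ := connectedComponentIn_preimage_inter_closure_inter_fiber_nonempty hg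
    hfib hX hXc subset_rfl hx₀ ⟨hZX hz, hz⟩
  rw [inter_eq_right.2 hZX] at hlC
  have hl : l ∈ closure (g ⁻¹' (X \ {x₀})) ∩ g ⁻¹' {x₀} :=
    ⟨connectedComponentIn_subset _ _ hlC, hlL⟩
  rw [hab] at hl
  rw [connectedComponentIn_eq hlC]
  rcases hl with rfl | rfl
  exacts [Or.inl rfl, Or.inr rfl]

theorem preimage_inter_closure_inter_subset_connectedComponentIn (hg : Continuous g)
    (hfib : ∀ y, IsConnected (g ⁻¹' {y})) {K : Set β} (hK : IsClosed K) (hKc : IsConnected K)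
    (hKX : K ⊆ X) {U₁ U₂ : Set α} (hU₁ : IsOpen U₁) (hU₂ : IsOpen U₂) (hdisj : Disjoint U₁ U₂)
    (hKU : g ⁻¹' K ∩ closure (g ⁻¹' (X \ {x₀})) ⊆ U₁ ∪ U₂)
    {z : α} (hU₁L : closure (g ⁻¹' (X \ {x₀})) ∩ g ⁻¹' {x₀} ∩ U₁ ⊆ {z})
    (hz : z ∈ g ⁻¹' K ∩ closure (g ⁻¹' (X \ {x₀}))) :
    g ⁻¹' K ∩ closure (g ⁻¹' (X \ {x₀})) ∩ U₁ ⊆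
      connectedComponentIn (g ⁻¹' K ∩ closure (g ⁻¹' (X \ {x₀}))) z := by
  by_cases hx₀K : x₀ ∈ K
  · refine inter_subset_connectedComponentIn_of_separated hU₁ hU₂ hdisj hKU
      (fun l hl => hU₁L ⟨⟨hl.1.1.2, hl.1.2⟩, hl.2⟩) fun y hy =>
      connectedComponentIn_preimage_inter_closure_inter_fiber_nonempty hg hfib hK hKc hKX hx₀K hy
  · have hSK : g ⁻¹' K ∩ closure (g ⁻¹' (X \ {x₀})) = g ⁻¹' K := inter_eq_left.2 fun w hw =>
      subset_closure ⟨hKX hw, fun h => hx₀K (mem_singleton_iff.1 h ▸ hw)⟩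
    rw [hSK] at hz ⊢
    rw [(hg.isConnected_preimage_of_fibers hfib hK hKc).isPreconnected.connectedComponentIn hz]
    exact inter_subset_left

theorem locallyConnectedSpace_closure_preimage_diff [RegularSpace β] (hg : Continuous g)
    (hfib : ∀ y, IsConnected (g ⁻¹' {y})) (hX : IsClosed X) [LocallyConnectedSpace X]
    (hinj : ∀ y ≠ x₀, (g ⁻¹' {y}).Subsingleton)
    (hfin : (closure (g ⁻¹' (X \ {x₀})) ∩ g ⁻¹' {x₀}).Finite) :
    LocallyConnectedSpace (closure (g ⁻¹' (X \ {x₀}))) := by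
  set Z := closure (g ⁻¹' (X \ {x₀}))
  have hZX : Z ⊆ g ⁻¹' X := closure_minimal (preimage_mono sdiff_subset) (hX.preimage hg)
  refine locallyConnectedSpace_subtype_iff.2 fun z hz U hU => ?_
  obtain ⟨U₁, U₂, hU₁, hU₂, hzU₁, hU₂L, hdisj⟩ := SeparatedNhds.of_finite (finite_singleton z)
    (hfin.sdiff (t := {z})) (disjoint_singleton_left.2 fun h => h.2 rfl)
  set V₁ := U₁ ∩ interior U
  have hV₁ : IsOpen V₁ := hU₁.inter isOpen_interior
  have hzV₁ : z ∈ V₁ := ⟨hzU₁ rfl, mem_interior_iff_mem_nhds.2 hU⟩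
  have hdisj₁ : Disjoint V₁ U₂ := hdisj.mono_left inter_subset_left
  have hV₁L : Z ∩ g ⁻¹' {x₀} ∩ V₁ ⊆ {z} := fun l hl =>
    by_contra fun hlz => disjoint_left.1 hdisj₁ hl.2 (hU₂L ⟨hl.1, hlz⟩)
  have hfiber : Z ∩ g ⁻¹' {g z} ⊆ V₁ ∪ U₂ := by
    rintro w ⟨hwZ, hw⟩
    by_cases hwz : w = z
    · exact Or.inl (hwz ▸ hzV₁)
    · have hgz : g z = x₀ := by_contra fun h => hwz (hinj _ h hw rfl)
      exact Or.inr (hU₂L ⟨⟨hwZ, hgz ▸ hw⟩, hwz⟩)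
  obtain ⟨K, hK, hKX, hKc, hKconn, hKV⟩ := exists_mem_nhdsWithin_preimage_inter_subset hg hX
    isClosed_closure (hV₁.union hU₂) (hZX hz) hfiber
  set S := g ⁻¹' K ∩ Z
  have hS : S ∈ 𝓝[Z] z := inter_mem (hg.continuousWithinAt.preimage_mem_nhdsWithin'
    (nhdsWithin_mono _ (image_subset_iff.2 hZX) hK)) self_mem_nhdsWithin
  have hzS : z ∈ S := mem_of_mem_nhdsWithin hz hS
  refine ⟨connectedComponentIn S z, mem_of_superset
    (inter_mem hS (mem_nhdsWithin_of_mem_nhds (hV₁.mem_nhds hzV₁)))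
    (preimage_inter_closure_inter_subset_connectedComponentIn hg hfib hKc hKconn hKX hV₁ hU₂
      hdisj₁ hKV hV₁L hzS),
    subset_inter ((connectedComponentIn_subset S z).trans inter_subset_right) ?_,
    isPreconnected_connectedComponentIn⟩
  exact (isPreconnected_connectedComponentIn.subset_left_of_subset_union hV₁ hU₂ hdisj₁
    ((connectedComponentIn_subset S z).trans hKV) ⟨z, mem_connectedComponentIn hzS, hzV₁⟩).trans
    (inter_subset_right.trans interior_subset)

end Collapse

theorem isConnected_seg (x₀ : ℂ) : IsConnected (seg x₀) :=
  (isConnected_Icc zero_le_one).image _ (OnePoint.continuous_coe.comp (by fun_prop)).continuousOn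

theorem segO_subset_seg (x₀ : ℂ) : segO x₀ ⊆ seg x₀ :=
  image_mono Ioo_subset_Icc_self

theorem seg_diff_segO (x₀ : ℂ) :
    seg x₀ \ segO x₀ = {((x₀ : ℂ) : OnePoint ℂ), ((x₀ + Complex.I : ℂ) : OnePoint ℂ)} := by
  have hinj : Function.Injective fun t : ℝ => ((x₀ + t * Complex.I : ℂ) : OnePoint ℂ) :=
    fun s t h => by simpa using congrArg Complex.im (OnePoint.coe_injective h)
  rw [seg, segO, ← image_sdiff hinj, Icc_sdiff_Ioo_same zero_le_one, image_pair]
  simp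

theorem isConnected_preimage_singleton_of_preimage_eq_seg {g : OnePoint ℂ → OnePoint ℂ} {x₀ : ℂ}
    (hgL : g ⁻¹' {((x₀ : ℂ) : OnePoint ℂ)} = seg x₀)
    (hginj : ∀ x : OnePoint ℂ, x ≠ ((x₀ : ℂ) : OnePoint ℂ) → ∃ y, g ⁻¹' {x} = {y})
    (y : OnePoint ℂ) : IsConnected (g ⁻¹' {y}) := by
  by_cases hy : y = x₀
  · rw [hy, hgL]
    exact isConnected_seg x₀
  · obtain ⟨w, hw⟩ := hginj y hy
    rw [hw]
    exact isConnected_singleton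

theorem stmt_16_general (x₀ : ℂ) (g : OnePoint ℂ → OnePoint ℂ)
    (hgc : Continuous g)
    (hgL : g ⁻¹' {((x₀ : ℂ) : OnePoint ℂ)} = seg x₀)
    (hginj : ∀ x : OnePoint ℂ, x ≠ ((x₀ : ℂ) : OnePoint ℂ) → ∃ y, g ⁻¹' {x} = {y})
    (X : Set (OnePoint ℂ)) (hcomp : IsCompact X) (hconn : IsConnected X)
    (hlc : LocallyConnectedSpace ↥X)
    (hx₀ : ((x₀ : ℂ) : OnePoint ℂ) ∈ X)
    (hcl : closure (g ⁻¹' X \ seg x₀) ∩ seg x₀ =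
      {((x₀ : ℂ) : OnePoint ℂ), ((x₀ + Complex.I : ℂ) : OnePoint ℂ)}) :
    (∃ C₁ C₂ : Set (OnePoint ℂ), comps (g ⁻¹' X \ segO x₀) ⊆ {C₁, C₂}) ∧
    ∀ C ∈ comps (g ⁻¹' X \ segO x₀),
      IsCompact C ∧ IsConnected C ∧ LocallyConnectedSpace ↥C := by
  have hfib := isConnected_preimage_singleton_of_preimage_eq_seg hgL hginj
  have hZ := diff_eq_closure_diff (hcomp.isClosed.preimage hgc) (segO_subset_seg x₀)
    (hcl.trans (seg_diff_segO x₀).symm)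
  rw [← hgL, ← preimage_sdiff] at hZ hcl
  rw [hZ]
  have := locallyConnectedSpace_closure_preimage_diff hgc hfib hcomp.isClosed
    (fun y hy => (hginj y hy).elim fun w hw => hw ▸ subsingleton_singleton) (hcl ▸ toFinite _)
  exact ⟨⟨_, _, comps_closure_preimage_diff_subset hgc hfib hcomp.isClosed hconn hx₀ hcl⟩,
    fun C hC => isCompact_isConnected_locallyConnectedSpace_of_mem_comps isClosed_closure hC⟩

/-- under the collapsing map `g`, if `X` is a locally connected
continuum with `x₀ ∈ X` and `closure (g⁻¹(X) \ L) ∩ L = {x₀, x₀ + i}`, then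
`g⁻¹(X) \ L°` has at most two connected components and each of its components
is a locally connected continuum. -/
theorem stmt_16 (x₀ : ℂ) (g : OnePoint ℂ → OnePoint ℂ)
    (hgc : Continuous g) (hgs : Function.Surjective g)
    (hgL : g ⁻¹' {((x₀ : ℂ) : OnePoint ℂ)} = seg x₀)
    (hginj : ∀ x : OnePoint ℂ, x ≠ ((x₀ : ℂ) : OnePoint ℂ) → ∃ y, g ⁻¹' {x} = {y})
    (X : Set (OnePoint ℂ)) (hcomp : IsCompact X) (hconn : IsConnected X)
    (hlc : LocallyConnectedSpace ↥X)
    (hx₀ : ((x₀ : ℂ) : OnePoint ℂ) ∈ X)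
    (hcl : closure (g ⁻¹' X \ seg x₀) ∩ seg x₀ =
      {((x₀ : ℂ) : OnePoint ℂ), ((x₀ + Complex.I : ℂ) : OnePoint ℂ)}) :
    (∃ C₁ C₂ : Set (OnePoint ℂ), comps (g ⁻¹' X \ segO x₀) ⊆ {C₁, C₂}) ∧
    ∀ C ∈ comps (g ⁻¹' X \ segO x₀),
      IsCompact C ∧ IsConnected C ∧ LocallyConnectedSpace ↥C :=
  stmt_16_general x₀ g hgc hgL hginj X hcomp hconn hlc hx₀ hcl
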